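/- Let a < b, let f : ℝ → ℝ be continuous, let c₀ > 0, K > 0, ε₀ > 0 and p ∈ [1,∞), and set α := 1 − 1/p. Then there exists C > 0 such that the following holds: whenever ε ∈ (0,ε₀) and g : [a,b] → ℝ is twice continuously differentiable with |g''(u) − f(u)| ≤ c₀ (g'(u)² + ε) for all u ∈ [a,b] and ∫ₐᵇ g'(u)² du ≤ K, then (∫ₐᵇ |g''(u)|^p du)^{1/p} ≤ C, sup_{u∈[a,b]} |g'(u)| ≤ C, and |g'(u) − g'(v)| ≤ C |u − v|^α for all u, v ∈ [a,b]. -/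

import Mathlib

/-!
The differential inequality gives `|g''| ≤ M + c₀ ε₀ + c₀ g'²` with `M = sup |f|`, so
`∫ |g''| ≤ (M + c₀ ε₀)(b - a) + c₀ K`. This bounds the oscillation of `g'`, and since `g'` is
also small in `L²` (`|g'| ≤ (1 + g'²)/2` averaged over `[a,b]`), `g'` is bounded uniformly.
Feeding this back into the differential inequality bounds `g''` uniformly, which gives the `Lᵖ`
bound and makes `g'` Lipschitz, hence `(1 - 1/p)`-Hölder on the bounded interval `[a,b]`.
-/

open Set MeasureTheory intervalIntegral

theorem self_le_rpow_one_sub_mul_rpow {x d β : ℝ} (hx : 0 ≤ x) (hxd : x ≤ d) (hβ : 0 ≤ β) :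
    x ≤ x ^ (1 - β) * d ^ β := by
  rcases hx.eq_or_lt with rfl | hx
  · exact mul_nonneg (Real.rpow_nonneg le_rfl _) (Real.rpow_nonneg hxd _)
  calc x = x ^ (1 - β) * x ^ β := by rw [← Real.rpow_add hx, sub_add_cancel, Real.rpow_one]
    _ ≤ x ^ (1 - β) * d ^ β := by gcongr

section

variable {a b : ℝ}

theorem abs_sub_le_integral_abs_of_hasDerivWithinAt {F F' : ℝ → ℝ}
    (hF : ∀ x ∈ Icc a b, HasDerivWithinAt F (F' x) (Icc a b) x)
    (hF' : ContinuousOn F' (Icc a b)) {u v : ℝ} (hu : u ∈ Icc a b) (hv : v ∈ Icc a b) :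
    |F u - F v| ≤ ∫ t in a..b, |F' t| := by
  wlog hvu : v ≤ u generalizing u v
  · rw [abs_sub_comm]
    exact this hv hu (le_of_not_ge hvu)
  have hsub : Icc v u ⊆ Icc a b := Icc_subset_Icc hv.1 hu.2
  have hFTC : ∫ t in v..u, F' t = F u - F v := by
    refine integral_eq_sub_of_hasDeriv_right_of_le hvu
      (fun x hx => ((hF x (hsub hx)).continuousWithinAt).mono hsub) (fun x hx => ?_)
      ((hF'.mono hsub).intervalIntegrable_of_Icc hvu)
    have hx : x ∈ Ioo a b := ⟨hv.1.trans_lt hx.1, hx.2.trans_le hu.2⟩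
    exact ((hF x (Ioo_subset_Icc_self hx)).hasDerivAt (Icc_mem_nhds hx.1 hx.2)).hasDerivWithinAt
  calc |F u - F v| = |∫ t in v..u, F' t| := by rw [hFTC]
    _ ≤ ∫ t in v..u, |F' t| := abs_integral_le_integral_abs hvu
    _ ≤ ∫ t in a..b, |F' t| :=
      integral_mono_interval hv.1 hvu hu.2 (ae_of_all _ fun t => abs_nonneg _)
        (hF'.abs.intervalIntegrable_of_Icc (hv.1.trans (hvu.trans hu.2)))

theorem abs_sub_le_mul_rpow_of_hasDerivWithinAt {F F' : ℝ → ℝ}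
    (hF : ∀ x ∈ Icc a b, HasDerivWithinAt F (F' x) (Icc a b) x) {L β : ℝ}
    (hL : ∀ x ∈ Icc a b, |F' x| ≤ L) (hβ : 0 ≤ β) {u v : ℝ} (hu : u ∈ Icc a b)
    (hv : v ∈ Icc a b) :
    |F u - F v| ≤ L * (b - a) ^ β * |u - v| ^ (1 - β) := by
  have hlip : |F u - F v| ≤ L * |u - v| := by
    simpa only [Real.norm_eq_abs] using
      (convex_Icc a b).norm_image_sub_le_of_norm_hasDerivWithin_le hF hL hv hu
  have hL0 : 0 ≤ L := (abs_nonneg _).trans (hL u hu)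
  have hdist : |u - v| ≤ b - a :=
    abs_sub_le_iff.2 ⟨by linarith [hu.2, hv.1], by linarith [hv.2, hu.1]⟩
  calc |F u - F v| ≤ L * |u - v| := hlip
    _ ≤ L * (|u - v| ^ (1 - β) * (b - a) ^ β) := by
      gcongr
      exact self_le_rpow_one_sub_mul_rpow (abs_nonneg _) hdist hβ
    _ = L * (b - a) ^ β * |u - v| ^ (1 - β) := by ring

theorem abs_le_of_abs_sub_le_of_integral_sq_le (hab : a < b) {h : ℝ → ℝ}
    (hh : ContinuousOn h (Icc a b)) {I K : ℝ}
    (hosc : ∀ u ∈ Icc a b, ∀ v ∈ Icc a b, |h u - h v| ≤ I)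
    (hK : ∫ t in a..b, h t ^ 2 ≤ K) {u : ℝ} (hu : u ∈ Icc a b) :
    |h u| ≤ I + ((b - a) + K) / (2 * (b - a)) := by
  have hpt : ∀ v ∈ Icc a b, |h u| - I ≤ (1 + h v ^ 2) / 2 := fun v hv => by
    nlinarith [hosc u hu v hv, abs_sub_abs_le_abs_sub (h u) (h v), sq_abs (h v),
      sq_nonneg (|h v| - 1)]
  have hsq : IntervalIntegrable (fun v => h v ^ 2) volume a b :=
    (hh.pow 2).intervalIntegrable_of_Icc hab.le
  have hint : (|h u| - I) * (b - a) ≤ ((b - a) + K) / 2 :=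
    calc (|h u| - I) * (b - a) = ∫ _ in a..b, (|h u| - I) := by
          rw [intervalIntegral.integral_const, smul_eq_mul, mul_comm]
      _ ≤ ∫ v in a..b, (1 + h v ^ 2) / 2 :=
        integral_mono_on hab.le intervalIntegrable_const
          ((intervalIntegrable_const.add hsq).div_const 2) hpt
      _ = ((b - a) + ∫ v in a..b, h v ^ 2) / 2 := by
        rw [intervalIntegral.integral_div, integral_add intervalIntegrable_const hsq,
          intervalIntegral.integral_const, smul_eq_mul, mul_one]
      _ ≤ ((b - a) + K) / 2 := by linarith
  have hba : 0 < b - a := sub_pos.2 hab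
  rw [← sub_le_iff_le_add', le_div_iff₀ (by positivity)]
  linarith

theorem integral_abs_rpow_rpow_one_div_le (hab : a ≤ b) {φ : ℝ → ℝ}
    (hφ : ContinuousOn φ (Icc a b)) {B p : ℝ} (hp : 0 < p) (hB : ∀ t ∈ Icc a b, |φ t| ≤ B) :
    (∫ t in a..b, |φ t| ^ p) ^ (1 / p) ≤ B * (b - a) ^ (1 / p) := by
  have hB0 : 0 ≤ B := (abs_nonneg _).trans (hB a (left_mem_Icc.2 hab))
  calc (∫ t in a..b, |φ t| ^ p) ^ (1 / p) ≤ (∫ _ in a..b, B ^ p) ^ (1 / p) := by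
        gcongr
        · exact integral_nonneg hab fun t _ => by positivity
        · exact integral_mono_on hab
            ((hφ.abs.rpow_const fun _ _ => Or.inr hp.le).intervalIntegrable_of_Icc hab)
            intervalIntegrable_const fun t ht => by gcongr; exact hB t ht
    _ = B * (b - a) ^ (1 / p) := by
      rw [intervalIntegral.integral_const, smul_eq_mul,
        Real.mul_rpow (sub_nonneg.2 hab) (by positivity), ← Real.rpow_mul hB0,
        mul_one_div_cancel hp.ne', Real.rpow_one, mul_comm]

end

theorem lem_higher_regularity (a b : ℝ) (hab : a < b) (f : ℝ → ℝ)
    (hf : Continuous f) (c₀ K ε₀ : ℝ) (hc₀ : 0 < c₀)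
    (p : ℝ) (hp : 1 ≤ p) :
    ∃ C : ℝ, 0 < C ∧
      ∀ ε : ℝ, 0 < ε → ε < ε₀ →
      ∀ g g' g'' : ℝ → ℝ,
        (∀ u ∈ Set.Icc a b, HasDerivWithinAt g (g' u) (Set.Icc a b) u) →
        (∀ u ∈ Set.Icc a b, HasDerivWithinAt g' (g'' u) (Set.Icc a b) u) →
        ContinuousOn g'' (Set.Icc a b) →
        (∀ u ∈ Set.Icc a b, |g'' u - f u| ≤ c₀ * ((g' u) ^ 2 + ε)) →
        (∫ u in a..b, (g' u) ^ 2) ≤ K →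
        (∫ u in a..b, |g'' u| ^ p) ^ (1/p) ≤ C ∧
        (∀ u ∈ Set.Icc a b, |g' u| ≤ C) ∧
        (∀ u ∈ Set.Icc a b, ∀ v ∈ Set.Icc a b,
          |g' u - g' v| ≤ C * |u - v| ^ (1 - 1/p)) := by
  obtain ⟨M, hM⟩ := isCompact_Icc.exists_bound_of_continuousOn (hf.continuousOn (s := Icc a b))
  set I := (M + c₀ * ε₀) * (b - a) + c₀ * K
  set C₁ := I + ((b - a) + K) / (2 * (b - a))
  set C₂ := M + c₀ * ε₀ + c₀ * C₁ ^ 2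
  refine ⟨max (max C₁ (C₂ * (b - a) ^ (1 / p))) 1, by positivity, ?_⟩
  intro ε _ hεε₀ g g' g'' _ hg' hg''c hode hK
  have hg'c : ContinuousOn g' (Icc a b) := fun u hu => (hg' u hu).continuousWithinAt
  have habs : ∀ u ∈ Icc a b, |g'' u| ≤ M + c₀ * ε₀ + c₀ * g' u ^ 2 := fun u hu => by
    have hfu : |f u| ≤ M := by simpa only [Real.norm_eq_abs] using hM u hu
    nlinarith [hode u hu, abs_sub_abs_le_abs_sub (g'' u) (f u)]
  have hsq : IntervalIntegrable (fun u => c₀ * g' u ^ 2) volume a b :=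
    ((hg'c.pow 2).intervalIntegrable_of_Icc hab.le).const_mul c₀
  have hL1 : ∫ u in a..b, |g'' u| ≤ I :=
    calc ∫ u in a..b, |g'' u| ≤ ∫ u in a..b, (M + c₀ * ε₀ + c₀ * g' u ^ 2) :=
          integral_mono_on hab.le (hg''c.abs.intervalIntegrable_of_Icc hab.le)
            (intervalIntegrable_const.add hsq) habs
      _ = (M + c₀ * ε₀) * (b - a) + c₀ * ∫ u in a..b, g' u ^ 2 := by
        rw [integral_add intervalIntegrable_const hsq, intervalIntegral.integral_const_mul,
          intervalIntegral.integral_const, smul_eq_mul, mul_comm]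
      _ ≤ (M + c₀ * ε₀) * (b - a) + c₀ * K := by gcongr
  have hsup : ∀ u ∈ Icc a b, |g' u| ≤ C₁ := fun u hu =>
    abs_le_of_abs_sub_le_of_integral_sq_le hab hg'c
      (fun u hu v hv => (abs_sub_le_integral_abs_of_hasDerivWithinAt hg' hg''c hu hv).trans hL1)
      hK hu
  have hbound : ∀ u ∈ Icc a b, |g'' u| ≤ C₂ := fun u hu => by
    have : g' u ^ 2 ≤ C₁ ^ 2 := by
      rw [← sq_abs]; exact pow_le_pow_left₀ (abs_nonneg _) (hsup u hu) 2
    linarith [habs u hu, mul_le_mul_of_nonneg_left this hc₀.le]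
  refine ⟨?_, fun u hu => (hsup u hu).trans ((le_max_left _ _).trans (le_max_left _ _)), ?_⟩
  · exact (integral_abs_rpow_rpow_one_div_le hab.le hg''c (by linarith) hbound).trans
      ((le_max_right _ _).trans (le_max_left _ _))
  · intro u hu v hv
    calc |g' u - g' v| ≤ C₂ * (b - a) ^ (1 / p) * |u - v| ^ (1 - 1 / p) :=
          abs_sub_le_mul_rpow_of_hasDerivWithinAt hg' hbound (by positivity) hu hv
      _ ≤ max (max C₁ (C₂ * (b - a) ^ (1 / p))) 1 * |u - v| ^ (1 - 1 / p) := by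
        gcongr
        exact (le_max_right _ _).trans (le_max_left _ _)
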